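/- Let n ≥ 1 and let K be a symmetric n×n integer matrix with every off-diagonal entry equal to 0 or −1 and with every row sum ∑_j K_{ij} ≥ 0 (i.e., K is the Kirchhoff matrix of a quiver without multiple connections). Then for every 1 ≤ k ≤ n, the k-th smallest eigenvalue satisfies λ_k ≥ d_k − (n − k), where d_1 ≤ … ≤ d_n are the diagonal entries of K listed in increasing order. -/

import Mathlib

/-!
Courant–Fischer with two explicit subspaces. The eigenvectors of `λ_1, …, λ_k` span a space of
dimension `k` on which `⟪x, K x⟫ ≤ λ_k ‖x‖²`; the coordinate vectors of the `n - k + 1` vertices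
of largest degree span a space on which every diagonal entry is at least `d_k`. Their dimensions
add up to `n + 1`, so they share a nonzero `x`. Since the off-diagonal entries have absolute value
at most `1`, `⟪x, K x⟫ ≥ ∑ (K_ii + 1) x_i² - (∑ |x_i|)²`, and Cauchy–Schwarz on the support of `x`
bounds `(∑ |x_i|)²` by `(n - k + 1) ‖x‖²`, giving `⟪x, K x⟫ ≥ (d_k - (n - k)) ‖x‖²`.
-/

open Matrix Finset Module Submodule

theorem Submodule.exists_ne_zero_mem_of_finrank_lt_add {K V : Type*} [DivisionRing K]
    [AddCommGroup V] [Module K V] [FiniteDimensional K V] {s t : Submodule K V}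
    (h : finrank K V < finrank K s + finrank K t) : ∃ x ∈ s, x ∈ t ∧ x ≠ 0 := by
  have : ¬Disjoint s t := fun hst => (finrank_add_finrank_le_of_disjoint hst).not_gt h
  simpa [disjoint_def] using this

namespace OrthonormalBasis

variable {ι 𝕜 E : Type*} [Fintype ι] [RCLike 𝕜] [NormedAddCommGroup E] [InnerProductSpace 𝕜 E]
  (b : OrthonormalBasis ι 𝕜 E)

theorem finrank_span_image (s : Finset ι) : finrank 𝕜 (span 𝕜 (b '' s)) = #s := by
  classical
  have hb := b.orthonormal.linearIndependent
  rw [← coe_image, finrank_span_finset_eq_card,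
    card_image_of_injective _ (LinearIndependent.injective hb)]
  exact coe_image (f := b) ▸ (hb.linearIndepOn (s := s)).id_image

theorem inner_eq_zero_of_mem_span_image {s : Set ι} {x : E} (hx : x ∈ span 𝕜 (b '' s)) {j : ι}
    (hj : j ∉ s) : inner 𝕜 (b j) x = 0 := by
  rw [← b.coe_toBasis, Basis.mem_span_image] at hx
  rw [← b.repr_apply_apply, ← b.coe_toBasis_repr_apply]
  exact Finsupp.notMem_support_iff.mp fun h => hj (hx h)

theorem re_inner_map_self_le_of_mem_span_image {T : E →ₗ[𝕜] E} {μ : ι → ℝ}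
    (hT : ∀ j, T (b j) = (μ j : 𝕜) • b j) {s : Set ι} {c : ℝ} (hμ : ∀ j ∈ s, μ j ≤ c)
    {x : E} (hx : x ∈ span 𝕜 (b '' s)) : RCLike.re (inner 𝕜 x (T x)) ≤ c * ‖x‖ ^ 2 := by
  have hTx : T x = ∑ j, (inner 𝕜 (b j) x * μ j) • b j := by
    conv_lhs => rw [← b.sum_repr' x]
    simp [map_sum, hT, smul_smul]
  calc RCLike.re (inner 𝕜 x (T x)) = ∑ j, μ j * ‖inner 𝕜 (b j) x‖ ^ 2 := by
        rw [hTx, inner_sum, map_sum]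
        refine sum_congr rfl fun j _ => ?_
        rw [inner_smul_right, ← inner_conj_symm x (b j), mul_right_comm, RCLike.mul_conj]
        simp [mul_comm]
    _ ≤ ∑ j, c * ‖inner 𝕜 (b j) x‖ ^ 2 := sum_le_sum fun j _ => by
        by_cases hj : j ∈ s
        · gcongr
          exact hμ j hj
        · simp [b.inner_eq_zero_of_mem_span_image hx hj]
    _ = c * ‖x‖ ^ 2 := by rw [← mul_sum, b.sum_sq_norm_inner_right]

end OrthonormalBasis

section QuadraticForm

variable {ι R : Type*} [Fintype ι] [CommRing R] [LinearOrder R] [IsStrictOrderedRing R]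

theorem sq_sum_abs_le_card_mul_sum_sq {s : Finset ι} {x : ι → R} (hx : ∀ i ∉ s, x i = 0) :
    (∑ i, |x i|) ^ 2 ≤ #s * ∑ i, x i ^ 2 := by
  have hsupp {f : R → R} (hf : f 0 = 0) : ∑ i ∈ s, f (x i) = ∑ i, f (x i) :=
    sum_subset (subset_univ s) fun i _ hi => by rw [hx i hi, hf]
  rw [← hsupp abs_zero, ← hsupp (f := (· ^ 2)) (zero_pow two_ne_zero)]
  simpa only [sq_abs] using sq_sum_le_card_mul_sum_sq (s := s) (f := fun i => |x i|)

namespace Matrix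

variable {A : Matrix ι ι R}

theorem sum_diag_add_one_mul_sq_sub_sq_sum_abs_le_dotProduct_mulVec
    (hA : ∀ i j, i ≠ j → |A i j| ≤ 1) (x : ι → R) :
    ∑ i, (A i i + 1) * x i ^ 2 - (∑ i, |x i|) ^ 2 ≤ x ⬝ᵥ A *ᵥ x := by
  classical
  -- Writing the diagonal term as `(A i i + 1) x_i² - |x_i| |x_i|` lets the correction
  -- `- |x_i| |x_j|` run over all pairs, so that it sums to `- (∑ |x_i|)²`.
  have hterm (i j : ι) : (if i = j then (A i i + 1) * x i ^ 2 else 0) - |x i| * |x j|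
      ≤ x i * (A i j * x j) := by
    by_cases hij : i = j
    · subst hij
      rw [if_pos rfl, abs_mul_abs_self]
      exact le_of_eq (by ring)
    · have h : |x i * (A i j * x j)| ≤ |x i| * |x j| := by
        rw [abs_mul, abs_mul, mul_left_comm]
        exact mul_le_of_le_one_left (by positivity) (hA i j hij)
      rw [if_neg hij, zero_sub]
      exact (neg_le_neg h).trans (neg_abs_le _)
  calc ∑ i, (A i i + 1) * x i ^ 2 - (∑ i, |x i|) ^ 2
      = ∑ i, ∑ j, ((if i = j then (A i i + 1) * x i ^ 2 else 0) - |x i| * |x j|) := by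
        simp [sum_sub_distrib, sq, sum_mul_sum]
    _ ≤ x ⬝ᵥ A *ᵥ x := by
        simp only [dotProduct, mulVec, mul_sum]
        exact sum_le_sum fun i _ => sum_le_sum fun j _ => hterm i j

theorem sub_card_sub_one_mul_sum_sq_le_dotProduct_mulVec (hA : ∀ i j, i ≠ j → |A i j| ≤ 1)
    {s : Finset ι} {c : R} (hc : ∀ i ∈ s, c ≤ A i i) {x : ι → R} (hx : ∀ i ∉ s, x i = 0) :
    (c - (#s - 1)) * ∑ i, x i ^ 2 ≤ x ⬝ᵥ A *ᵥ x := by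
  have hdiag : (c + 1) * ∑ i, x i ^ 2 ≤ ∑ i, (A i i + 1) * x i ^ 2 := by
    rw [mul_sum]
    refine sum_le_sum fun i _ => ?_
    by_cases hi : i ∈ s
    · gcongr
      exact hc i hi
    · simp [hx i hi]
  linarith [sq_sum_abs_le_card_mul_sum_sq hx,
    sum_diag_add_one_mul_sq_sub_sq_sum_abs_le_dotProduct_mulVec hA x]

end Matrix

end QuadraticForm

namespace Tuple

variable {α : Type*} [LinearOrder α] {n : ℕ} (f : Fin n → α) {m i : Fin n}

theorem apply_sort_le_of_mem_image_Ici (hi : i ∈ (Ici m).image (sort f)) :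
    f (sort f m) ≤ f i := by
  obtain ⟨l, hl, rfl⟩ := mem_image.mp hi
  exact monotone_sort f (mem_Ici.mp hl)

theorem le_apply_sort_of_mem_image_Iic (hi : i ∈ (Iic m).image (sort f)) :
    f i ≤ f (sort f m) := by
  obtain ⟨l, hl, rfl⟩ := mem_image.mp hi
  exact monotone_sort f (mem_Iic.mp hl)

end Tuple

/-- **Theorem 2 (lower bound for quivers without multiple connections).**
If `K` is the Kirchhoff matrix of a quiver without multiple connections
(symmetric integer matrix with off-diagonal entries in `{0, -1}` and
nonnegative row sums) on `n ≥ 1` vertices, then the `k`-th smallest eigenvalue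
satisfies `λ_k ≥ d_k - (n - k)`, where `d_1 ≤ ⋯ ≤ d_n` are the sorted diagonal
entries. -/
theorem quiver_eigenvalue_lower_bound
    (n : ℕ) (K : Matrix (Fin n) (Fin n) ℤ)
    (hoff : ∀ i j : Fin n, i ≠ j → K i j = 0 ∨ K i j = -1)
    (hK : (K.map (Int.cast : ℤ → ℝ)).IsHermitian)
    (lam : Fin n → ℝ)
    (hlam : lam = hK.eigenvalues ∘ Tuple.sort hK.eigenvalues)
    (d : Fin n → ℤ)
    (hd : d = (fun i => K i i) ∘ Tuple.sort (fun i => K i i)) :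
    ∀ (k : ℕ) (hk1 : 1 ≤ k) (hkn : k ≤ n),
      (d ⟨k - 1, by omega⟩ : ℝ) - ((n - k : ℕ) : ℝ) ≤ lam ⟨k - 1, by omega⟩ := by
  intro k hk1 hkn
  subst hlam hd
  set σ := Tuple.sort hK.eigenvalues
  set τ := Tuple.sort fun i => K i i
  set m : Fin n := ⟨k - 1, by omega⟩
  set sW := (Iic m).image σ
  set sU := (Ici m).image τ
  have hsW : #sW = k := by
    rw [card_image_of_injective _ σ.injective, Fin.card_Iic, Fin.val_mk]; omega
  have hsU : #sU = n - k + 1 := by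
    rw [card_image_of_injective _ τ.injective, Fin.card_Ici, Fin.val_mk]; omega
  obtain ⟨x, hxW, hxU, hx0⟩ := Submodule.exists_ne_zero_mem_of_finrank_lt_add
    (s := span ℝ (hK.eigenvectorBasis '' sW))
    (t := span ℝ (EuclideanSpace.basisFun (Fin n) ℝ '' sU)) (by
      rw [OrthonormalBasis.finrank_span_image, OrthonormalBasis.finrank_span_image,
        finrank_euclideanSpace_fin]
      omega)
  set T := toLpLin 2 2 (K.map (Int.cast : ℤ → ℝ))
  have hupper : inner ℝ x (T x) ≤ hK.eigenvalues (σ m) * ‖x‖ ^ 2 :=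
    hK.eigenvectorBasis.re_inner_map_self_le_of_mem_span_image
      (fun j => WithLp.ofLp_injective 2 (hK.mulVec_eigenvectorBasis j))
      (fun j hj => Tuple.le_apply_sort_of_mem_image_Iic _ hj) hxW
  have hq : inner ℝ x (T x) = x.ofLp ⬝ᵥ K.map (Int.cast : ℤ → ℝ) *ᵥ x.ofLp := by
    simp [T, EuclideanSpace.inner_eq_star_dotProduct, toLpLin_apply, dotProduct_comm]
  have hlower : ((K (τ m) (τ m) : ℝ) - (#sU - 1)) * ‖x‖ ^ 2 ≤ inner ℝ x (T x) := by
    rw [hq, EuclideanSpace.real_norm_sq_eq]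
    refine sub_card_sub_one_mul_sum_sq_le_dotProduct_mulVec (fun i j hij => ?_)
      (fun i hi => ?_) (fun i hi => ?_)
    · rcases hoff i j hij with h | h <;> simp [h]
    · simpa using Tuple.apply_sort_le_of_mem_image_Ici (fun i => K i i) hi
    · rw [← EuclideanSpace.basisFun_inner]
      exact (EuclideanSpace.basisFun (Fin n) ℝ).inner_eq_zero_of_mem_span_image hxU
        (by simpa using hi)
  rw [hsU, Nat.cast_add_one, add_sub_cancel_right] at hlower
  exact le_of_mul_le_mul_right (hlower.trans hupper) (pow_pos (norm_pos_iff.mpr hx0) 2)
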